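/- arXiv:1210.0090 — 9 statements merged into one kernel-verified Lean document; each statement's English description precedes it below -/
import Mathlib

section
/- Let a, b, c : ℕ → ℝ be the sequences with a₀ = 1, b₀ = 0, c₀ = 0 and a_{n+1} = 3a_n³ + 6a_n²b_n, b_{n+1} = a_n³ + 7a_n²b_n + 7a_n b_n² + a_n²c_n, c_{n+1} = a_n³ + 12a_n²b_n + 36a_n b_n² + 14b_n³ + 3a_n²c_n + 12a_n b_n c_n, and define s_{n+1} = 16a_n³ + 72a_n²b_n + 78a_n b_n² + 14b_n³ + 9a_n²c_n + 12a_n b_n c_n. Then for every n ≥ 1, s_n = (1/4) · 3^{(3/4)(−1 + 3^{n−1} − 2(n−1))} · 5^{(1/4)(−3 + 3^n − 2(n−1))} · (3^n + 5^n)². -/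
/-!
With `t = (5/3)^n` and `α n = 3^((3^n + 2n - 1)/4) * 5^((3^n - 2n - 1)/4)`, the sequences are
`a n = α n`, `b n = α n * (t - 1)/2` and `c n = 3 α n ((t - 1)/2)^2`. The exponents of `α` are
chosen so that `α (n+1) = 3 α(n)^3 t`, which is the recursion for `a` once `a + 2b = α t` is
substituted; the recursions for `b` and `c` then become polynomial identities in `α n` and `t`.
Substituting the closed forms into `s (n+1)` gives `α(n)^3 t (3 + 5t)^2 / 4`, and this is the
claimed product of powers of `3` and `5`.
-/

namespace Apollonian

lemma rpow_three_mul_add_intCast {x : ℝ} (hx : 0 < x) (q : ℝ) (k : ℤ) :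
    x ^ (3 * q + k) = (x ^ q) ^ 3 * x ^ k := by
  rw [Real.rpow_add_intCast hx.ne', mul_comm 3 q, ← Nat.cast_ofNat, Real.rpow_mul_natCast hx.le]

noncomputable def scale (n : ℕ) : ℝ :=
  3 ^ (((3 : ℝ) ^ n + 2 * n - 1) / 4) * 5 ^ (((3 : ℝ) ^ n - 2 * n - 1) / 4)

lemma scale_zero : scale 0 = 1 := by
  norm_num [scale]

lemma scale_succ (n : ℕ) : scale (n + 1) = 3 * scale n ^ 3 * (5 / 3) ^ n := by
  have hexp3 : ((3 : ℝ) ^ (n + 1) + 2 * ((n + 1 : ℕ) : ℝ) - 1) / 4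
      = 3 * (((3 : ℝ) ^ n + 2 * n - 1) / 4) + ((1 - n : ℤ) : ℝ) := by
    push_cast; ring
  have hexp5 : ((3 : ℝ) ^ (n + 1) - 2 * ((n + 1 : ℕ) : ℝ) - 1) / 4
      = 3 * (((3 : ℝ) ^ n - 2 * n - 1) / 4) + ((n : ℤ) : ℝ) := by
    push_cast; ring
  rw [scale, scale, hexp3, hexp5, rpow_three_mul_add_intCast (by norm_num),
    rpow_three_mul_add_intCast (by norm_num), zpow_sub₀ (by norm_num), zpow_one, zpow_natCast,
    zpow_natCast, div_pow]
  field_simp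

theorem closed_form (a b c : ℕ → ℝ)
    (ha0 : a 0 = 1) (hb0 : b 0 = 0) (hc0 : c 0 = 0)
    (ha : ∀ n, a (n + 1) = 3 * (a n) ^ 3 + 6 * (a n) ^ 2 * b n)
    (hb : ∀ n, b (n + 1) = (a n) ^ 3 + 7 * (a n) ^ 2 * b n + 7 * a n * (b n) ^ 2 + (a n) ^ 2 * c n)
    (hc : ∀ n, c (n + 1) = (a n) ^ 3 + 12 * (a n) ^ 2 * b n + 36 * a n * (b n) ^ 2 + 14 * (b n) ^ 3
        + 3 * (a n) ^ 2 * c n + 12 * a n * b n * c n) (n : ℕ) :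
    a n = scale n ∧ b n = scale n * ((5 / 3) ^ n - 1) / 2 ∧
      c n = 3 * scale n * (((5 / 3) ^ n - 1) / 2) ^ 2 := by
  induction n with
  | zero => simp [ha0, hb0, hc0, scale_zero]
  | succ n ih =>
    obtain ⟨iha, ihb, ihc⟩ := ih
    refine ⟨?_, ?_, ?_⟩
    · rw [ha, iha, ihb, scale_succ]; ring
    · rw [hb, iha, ihb, ihc, scale_succ, pow_succ _ n]; ring
    · rw [hc, iha, ihb, ihc, scale_succ, pow_succ _ n]; ring

lemma rpow_product_eq_scale_cube (m : ℕ) :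
    (1 / 4) * (3 : ℝ) ^ ((3 / 4 : ℝ) * (-1 + (3 : ℝ) ^ (m + 1 - 1) - 2 * (((m + 1 : ℕ) : ℝ) - 1)))
        * (5 : ℝ) ^ ((1 / 4 : ℝ) * (-3 + (3 : ℝ) ^ (m + 1) - 2 * (((m + 1 : ℕ) : ℝ) - 1)))
        * ((3 : ℝ) ^ (m + 1) + (5 : ℝ) ^ (m + 1)) ^ 2
      = scale m ^ 3 * (5 / 3) ^ m * (3 + 5 * (5 / 3) ^ m) ^ 2 / 4 := by
  have hexp3 : (3 / 4 : ℝ) * (-1 + (3 : ℝ) ^ (m + 1 - 1) - 2 * (((m + 1 : ℕ) : ℝ) - 1))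
      = 3 * (((3 : ℝ) ^ m + 2 * m - 1) / 4) + ((-(3 * m : ℕ) : ℤ) : ℝ) := by
    rw [Nat.add_sub_cancel]; push_cast; ring
  have hexp5 : (1 / 4 : ℝ) * (-3 + (3 : ℝ) ^ (m + 1) - 2 * (((m + 1 : ℕ) : ℝ) - 1))
      = 3 * (((3 : ℝ) ^ m - 2 * m - 1) / 4) + ((m : ℤ) : ℝ) := by
    push_cast; ring
  rw [hexp3, hexp5, rpow_three_mul_add_intCast (by norm_num),
    rpow_three_mul_add_intCast (by norm_num), zpow_neg, zpow_natCast, zpow_natCast, pow_mul',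
    scale, div_pow]
  field_simp
  ring

end Apollonian

open Apollonian in
theorem apollonian_spanning_trees
    (a b c : ℕ → ℝ)
    (ha0 : a 0 = 1) (hb0 : b 0 = 0) (hc0 : c 0 = 0)
    (ha : ∀ n, a (n + 1) = 3 * (a n) ^ 3 + 6 * (a n) ^ 2 * b n)
    (hb : ∀ n, b (n + 1) = (a n) ^ 3 + 7 * (a n) ^ 2 * b n + 7 * a n * (b n) ^ 2 + (a n) ^ 2 * c n)
    (hc : ∀ n, c (n + 1) = (a n) ^ 3 + 12 * (a n) ^ 2 * b n + 36 * a n * (b n) ^ 2 + 14 * (b n) ^ 3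
        + 3 * (a n) ^ 2 * c n + 12 * a n * b n * c n)
    (s : ℕ → ℝ)
    (hs : ∀ n, s (n + 1) = 16 * (a n) ^ 3 + 72 * (a n) ^ 2 * b n + 78 * a n * (b n) ^ 2
        + 14 * (b n) ^ 3 + 9 * (a n) ^ 2 * c n + 12 * a n * b n * c n) :
    ∀ n : ℕ, 1 ≤ n →
      s n = (1 / 4) * (3 : ℝ) ^ ((3 / 4 : ℝ) * (-1 + (3 : ℝ) ^ (n - 1) - 2 * ((n : ℝ) - 1)))
          * (5 : ℝ) ^ ((1 / 4 : ℝ) * (-3 + (3 : ℝ) ^ n - 2 * ((n : ℝ) - 1)))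
          * ((3 : ℝ) ^ n + (5 : ℝ) ^ n) ^ 2 := by
  intro n hn
  obtain ⟨m, rfl⟩ : ∃ m, n = m + 1 := ⟨n - 1, by omega⟩
  obtain ⟨ham, hbm, hcm⟩ := closed_form a b c ha0 hb0 hc0 ha hb hc m
  rw [rpow_product_eq_scale_cube, hs, ham, hbm, hcm]
  ring
end

section
/- Let a, b, c : ℕ → ℝ be the sequences with a₀ = 1, b₀ = 0, c₀ = 0 and a_{n+1} = 3a_n³ + 6a_n²b_n, b_{n+1} = a_n³ + 7a_n²b_n + 7a_n b_n² + a_n²c_n, c_{n+1} = a_n³ + 12a_n²b_n + 36a_n b_n² + 14b_n³ + 3a_n²c_n + 12a_n b_n c_n. Then for every n ≥ 0, a_n = 3^{−1/4 + 3^n/4 + n/2} · 5^{−1/4 + 3^n/4 − n/2}. -/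
/-!
With `r = 5/3`, the recursion preserves `b n = a n * (r ^ n - 1) / 2` and
`c n = a n * 3 * (r ^ n - 1) ^ 2 / 4`. Substituting these into the recursion for `a` collapses it to
`a (n + 1) = 3 * r ^ n * a n ^ 3`, and the closed form is the unique solution of this first-order
recursion with `a 0 = 1`: its exponents `e n` of `3` and `d n` of `5` satisfy
`e (n + 1) = 3 * e n + 1 - n` and `d (n + 1) = 3 * d n + n`.
-/

open Real

noncomputable def apollonianA (n : ℕ) : ℝ :=
  (3 : ℝ) ^ (-(1 / 4 : ℝ) + (3 : ℝ) ^ n / 4 + (n : ℝ) / 2)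
    * (5 : ℝ) ^ (-(1 / 4 : ℝ) + (3 : ℝ) ^ n / 4 - (n : ℝ) / 2)

lemma Real.rpow_natCast_mul_add {x : ℝ} (hx : 0 < x) (k : ℕ) (s t : ℝ) :
    x ^ (k * s + t) = (x ^ s) ^ k * x ^ t := by
  rw [rpow_add hx, mul_comm (k : ℝ), rpow_mul hx.le, rpow_natCast]

lemma apollonianA_zero : apollonianA 0 = 1 := by
  norm_num [apollonianA]

lemma apollonianA_succ (n : ℕ) :
    apollonianA (n + 1) = 3 * (5 / 3 : ℝ) ^ n * apollonianA n ^ 3 := by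
  have h3 : (3 : ℝ) ^ (-(1 / 4 : ℝ) + (3 : ℝ) ^ (n + 1) / 4 + ((n + 1 : ℕ) : ℝ) / 2)
      = ((3 : ℝ) ^ (-(1 / 4 : ℝ) + (3 : ℝ) ^ n / 4 + (n : ℝ) / 2)) ^ 3 * 3 ^ (1 - (n : ℝ)) := by
    rw [← rpow_natCast_mul_add (by norm_num)]
    congr 1
    push_cast [pow_succ]
    ring
  have h5 : (5 : ℝ) ^ (-(1 / 4 : ℝ) + (3 : ℝ) ^ (n + 1) / 4 - ((n + 1 : ℕ) : ℝ) / 2)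
      = ((5 : ℝ) ^ (-(1 / 4 : ℝ) + (3 : ℝ) ^ n / 4 - (n : ℝ) / 2)) ^ 3 * 5 ^ (n : ℝ) := by
    rw [← rpow_natCast_mul_add (by norm_num)]
    congr 1
    push_cast [pow_succ]
    ring
  rw [apollonianA, h3, h5, rpow_sub (by norm_num), rpow_one, rpow_natCast, rpow_natCast, apollonianA,
    div_pow]
  field_simp

section Recursion

variable (a b c : ℕ → ℝ) (hb0 : b 0 = 0) (hc0 : c 0 = 0)
    (ha : ∀ n, a (n + 1) = 3 * (a n) ^ 3 + 6 * (a n) ^ 2 * b n)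
    (hb : ∀ n, b (n + 1) = (a n) ^ 3 + 7 * (a n) ^ 2 * b n + 7 * a n * (b n) ^ 2 + (a n) ^ 2 * c n)
    (hc : ∀ n, c (n + 1) = (a n) ^ 3 + 12 * (a n) ^ 2 * b n + 36 * a n * (b n) ^ 2 + 14 * (b n) ^ 3
        + 3 * (a n) ^ 2 * c n + 12 * a n * b n * c n)

include hb0 hc0 ha hb hc

lemma apollonian_b_c_eq (n : ℕ) :
    b n = a n * (((5 / 3 : ℝ) ^ n - 1) / 2) ∧
      c n = a n * (3 * ((5 / 3 : ℝ) ^ n - 1) ^ 2 / 4) := by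
  induction n with
  | zero => simp [hb0, hc0]
  | succ n ih =>
    obtain ⟨hbn, hcn⟩ := ih
    constructor
    · rw [hb, ha, hbn, hcn, pow_succ]; ring
    · rw [hc, ha, hbn, hcn, pow_succ]; ring

lemma apollonian_a_succ (n : ℕ) : a (n + 1) = 3 * (5 / 3 : ℝ) ^ n * a n ^ 3 := by
  rw [ha, (apollonian_b_c_eq a b c hb0 hc0 ha hb hc n).1]
  ring

end Recursion

theorem apollonian_a_closed_form
    (a b c : ℕ → ℝ)
    (ha0 : a 0 = 1) (hb0 : b 0 = 0) (hc0 : c 0 = 0)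
    (ha : ∀ n, a (n + 1) = 3 * (a n) ^ 3 + 6 * (a n) ^ 2 * b n)
    (hb : ∀ n, b (n + 1) = (a n) ^ 3 + 7 * (a n) ^ 2 * b n + 7 * a n * (b n) ^ 2 + (a n) ^ 2 * c n)
    (hc : ∀ n, c (n + 1) = (a n) ^ 3 + 12 * (a n) ^ 2 * b n + 36 * a n * (b n) ^ 2 + 14 * (b n) ^ 3
        + 3 * (a n) ^ 2 * c n + 12 * a n * b n * c n) :
    ∀ n : ℕ, a n = (3 : ℝ) ^ (-(1 / 4 : ℝ) + (3 : ℝ) ^ n / 4 + (n : ℝ) / 2)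
        * (5 : ℝ) ^ (-(1 / 4 : ℝ) + (3 : ℝ) ^ n / 4 - (n : ℝ) / 2) := by
  intro n
  change a n = apollonianA n
  induction n with
  | zero => rw [ha0, apollonianA_zero]
  | succ n ih => rw [apollonian_a_succ a b c hb0 hc0 ha hb hc, apollonianA_succ, ih]
end

section
/- Let a, b, c : ℕ → ℝ be the sequences with a₀ = 1, b₀ = 0, c₀ = 0 and a_{n+1} = 3a_n³ + 6a_n²b_n, b_{n+1} = a_n³ + 7a_n²b_n + 7a_n b_n² + a_n²c_n, c_{n+1} = a_n³ + 12a_n²b_n + 36a_n b_n² + 14b_n³ + 3a_n²c_n + 12a_n b_n c_n. Then for every n ≥ 0, c_n = (1/4) · 3^{(1/4)(3 + 3^n − 6n)} · 5^{(1/4)(−1 + 3^n − 2n)} · (3^n − 5^n)². -/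
/-!
With `r = 5/3`, the ansatz `a n = A n`, `b n = A n * (r ^ n - 1) / 2`,
`c n = 3/4 * A n * (r ^ n - 1) ^ 2` turns all three recurrences into the single one
`A (n + 1) = 3 * A n ^ 3 * r ^ n`. Writing `A n = 3 ^ x n * 5 ^ y n`, this becomes the linear
recurrences `x (n + 1) = 3 * x n + 1 - n` and `y (n + 1) = 3 * y n + n`, solved by
`x n = (3 ^ n + 2 n - 1) / 4` and `y n = (3 ^ n - 2 n - 1) / 4`.
-/

open Real

noncomputable def apollonianScale (n : ℕ) : ℝ :=
  (3 : ℝ) ^ (((3 : ℝ) ^ n + 2 * n - 1) / 4) * (5 : ℝ) ^ (((3 : ℝ) ^ n - 2 * n - 1) / 4)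

lemma apollonianScale_zero : apollonianScale 0 = 1 := by
  norm_num [apollonianScale]

lemma apollonianScale_succ (n : ℕ) :
    apollonianScale (n + 1) = 3 * apollonianScale n ^ 3 * ((5 : ℝ) / 3) ^ n := by
  have hx : ((3 : ℝ) ^ (n + 1) + 2 * ↑(n + 1) - 1) / 4
      = ((3 : ℝ) ^ n + 2 * n - 1) / 4 * (3 : ℕ) + 1 - n := by
    push_cast [pow_succ]; ring
  have hy : ((3 : ℝ) ^ (n + 1) - 2 * ↑(n + 1) - 1) / 4
      = ((3 : ℝ) ^ n - 2 * n - 1) / 4 * (3 : ℕ) + n := by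
    push_cast [pow_succ]; ring
  rw [apollonianScale, apollonianScale, hx, hy, rpow_sub_natCast (by norm_num),
    rpow_add_one (by norm_num), rpow_add_natCast (by norm_num), rpow_mul_natCast (by norm_num),
    rpow_mul_natCast (by norm_num), div_pow]
  field_simp

lemma apollonian_eq_of_scale (a b c A : ℕ → ℝ)
    (ha0 : a 0 = 1) (hb0 : b 0 = 0) (hc0 : c 0 = 0) (hA0 : A 0 = 1)
    (ha : ∀ n, a (n + 1) = 3 * (a n) ^ 3 + 6 * (a n) ^ 2 * b n)
    (hb : ∀ n, b (n + 1) = (a n) ^ 3 + 7 * (a n) ^ 2 * b n + 7 * a n * (b n) ^ 2 + (a n) ^ 2 * c n)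
    (hc : ∀ n, c (n + 1) = (a n) ^ 3 + 12 * (a n) ^ 2 * b n + 36 * a n * (b n) ^ 2 + 14 * (b n) ^ 3
        + 3 * (a n) ^ 2 * c n + 12 * a n * b n * c n)
    (hA : ∀ n, A (n + 1) = 3 * A n ^ 3 * ((5 : ℝ) / 3) ^ n) (n : ℕ) :
    a n = A n ∧ b n = A n * (((5 : ℝ) / 3) ^ n - 1) / 2 ∧
      c n = 3 / 4 * A n * (((5 : ℝ) / 3) ^ n - 1) ^ 2 := by
  induction n with
  | zero => simp [ha0, hb0, hc0, hA0]
  | succ n ih =>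
    obtain ⟨han, hbn, hcn⟩ := ih
    refine ⟨?_, ?_, ?_⟩
    · rw [ha, han, hbn, hA]; ring
    · rw [hb, han, hbn, hcn, hA, pow_succ]; ring
    · rw [hc, han, hbn, hcn, hA, pow_succ]; ring

lemma three_quarters_apollonianScale_mul_sq (n : ℕ) :
    3 / 4 * apollonianScale n * (((5 : ℝ) / 3) ^ n - 1) ^ 2
      = (1 / 4) * (3 : ℝ) ^ ((1 / 4 : ℝ) * (3 + (3 : ℝ) ^ n - 6 * (n : ℝ)))
        * (5 : ℝ) ^ ((1 / 4 : ℝ) * (-1 + (3 : ℝ) ^ n - 2 * (n : ℝ)))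
        * ((3 : ℝ) ^ n - (5 : ℝ) ^ n) ^ 2 := by
  have hx : (1 / 4 : ℝ) * (3 + (3 : ℝ) ^ n - 6 * (n : ℝ))
      = ((3 : ℝ) ^ n + 2 * n - 1) / 4 + 1 - ↑(2 * n) := by
    push_cast; ring
  have hy : (1 / 4 : ℝ) * (-1 + (3 : ℝ) ^ n - 2 * (n : ℝ)) = ((3 : ℝ) ^ n - 2 * n - 1) / 4 := by
    ring
  rw [apollonianScale, hx, hy, rpow_sub_natCast (by norm_num), rpow_add_one (by norm_num),
    pow_mul', div_pow]
  field_simp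
  ring

theorem apollonian_c_closed_form
    (a b c : ℕ → ℝ)
    (ha0 : a 0 = 1) (hb0 : b 0 = 0) (hc0 : c 0 = 0)
    (ha : ∀ n, a (n + 1) = 3 * (a n) ^ 3 + 6 * (a n) ^ 2 * b n)
    (hb : ∀ n, b (n + 1) = (a n) ^ 3 + 7 * (a n) ^ 2 * b n + 7 * a n * (b n) ^ 2 + (a n) ^ 2 * c n)
    (hc : ∀ n, c (n + 1) = (a n) ^ 3 + 12 * (a n) ^ 2 * b n + 36 * a n * (b n) ^ 2 + 14 * (b n) ^ 3
        + 3 * (a n) ^ 2 * c n + 12 * a n * b n * c n) :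
    ∀ n : ℕ, c n = (1 / 4) * (3 : ℝ) ^ ((1 / 4 : ℝ) * (3 + (3 : ℝ) ^ n - 6 * (n : ℝ)))
        * (5 : ℝ) ^ ((1 / 4 : ℝ) * (-1 + (3 : ℝ) ^ n - 2 * (n : ℝ)))
        * ((3 : ℝ) ^ n - (5 : ℝ) ^ n) ^ 2 := by
  intro n
  rw [(apollonian_eq_of_scale a b c apollonianScale ha0 hb0 hc0 apollonianScale_zero ha hb hc
    apollonianScale_succ n).2.2, three_quarters_apollonianScale_mul_sq]
end

section
/- Let a, b, c : ℕ → ℝ be the sequences with a₀ = 1, b₀ = 0, c₀ = 0 and a_{n+1} = 3a_n³ + 6a_n²b_n, b_{n+1} = a_n³ + 7a_n²b_n + 7a_n b_n² + a_n²c_n, c_{n+1} = a_n³ + 12a_n²b_n + 36a_n b_n² + 14b_n³ + 3a_n²c_n + 12a_n b_n c_n. Then for every n ≥ 0, a_n · c_n = 3 · b_n². -/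
theorem apollonian_step_form_eq {R : Type*} [CommRing R] (x y z : R) :
    (3 * x ^ 3 + 6 * x ^ 2 * y)
        * (x ^ 3 + 12 * x ^ 2 * y + 36 * x * y ^ 2 + 14 * y ^ 3 + 3 * x ^ 2 * z + 12 * x * y * z)
      - 3 * (x ^ 3 + 7 * x ^ 2 * y + 7 * x * y ^ 2 + x ^ 2 * z) ^ 2
      = 3 * x ^ 2 * (x ^ 2 + 4 * x * y + 7 * y ^ 2 - x * z) * (x * z - 3 * y ^ 2) := by
  ring

theorem apollonian_invariant
    (a b c : ℕ → ℝ)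
    (ha0 : a 0 = 1) (hb0 : b 0 = 0) (hc0 : c 0 = 0)
    (ha : ∀ n, a (n + 1) = 3 * (a n) ^ 3 + 6 * (a n) ^ 2 * b n)
    (hb : ∀ n, b (n + 1) = (a n) ^ 3 + 7 * (a n) ^ 2 * b n + 7 * a n * (b n) ^ 2 + (a n) ^ 2 * c n)
    (hc : ∀ n, c (n + 1) = (a n) ^ 3 + 12 * (a n) ^ 2 * b n + 36 * a n * (b n) ^ 2 + 14 * (b n) ^ 3
        + 3 * (a n) ^ 2 * c n + 12 * a n * b n * c n) :
    ∀ n : ℕ, a n * c n = 3 * (b n) ^ 2 := by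
  intro n
  induction n with
  | zero => simp [ha0, hb0, hc0]
  | succ n ih =>
    rw [← sub_eq_zero, ha, hb, hc, apollonian_step_form_eq, sub_eq_zero.mpr ih, mul_zero]
end

section
/- Let a, b, c : ℕ → ℝ be the sequences with a₀ = 1, b₀ = 0, c₀ = 0 and a_{n+1} = 3a_n³ + 6a_n²b_n, b_{n+1} = a_n³ + 7a_n²b_n + 7a_n b_n² + a_n²c_n, c_{n+1} = a_n³ + 12a_n²b_n + 36a_n b_n² + 14b_n³ + 3a_n²c_n + 12a_n b_n c_n. Then for every n ≥ 0, a_{n+1} = (5^n / 3^{n−1}) · a_n³. -/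
/-! With `s n = (5/3)^n`, the recursion keeps `b n = (s n - 1)/2 * a n` and
`c n = 3 * ((s n - 1)/2)^2 * a n`: substituting these into the recursions for `b` and `c`
reproduces them with `s (n+1) = 5/3 * s n` (a polynomial identity). Then
`a (n+1) = 3 * a n ^ 3 + 3 * (s n - 1) * a n ^ 3 = 3 * s n * a n ^ 3`, and `3 * (5/3)^n = 5^n / 3^(n-1)`. -/

theorem three_mul_five_div_three_pow (n : ℕ) :
    3 * (5 / 3 : ℝ) ^ n = 5 ^ n / 3 ^ ((n : ℝ) - 1) := by
  rw [Real.rpow_sub_one three_ne_zero, Real.rpow_natCast, div_pow]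
  field_simp

theorem apollonian_b_c_eq_of_recursion {a b c : ℕ → ℝ} (hb0 : b 0 = 0) (hc0 : c 0 = 0)
    (ha : ∀ n, a (n + 1) = 3 * (a n) ^ 3 + 6 * (a n) ^ 2 * b n)
    (hb : ∀ n, b (n + 1) = (a n) ^ 3 + 7 * (a n) ^ 2 * b n + 7 * a n * (b n) ^ 2 + (a n) ^ 2 * c n)
    (hc : ∀ n, c (n + 1) = (a n) ^ 3 + 12 * (a n) ^ 2 * b n + 36 * a n * (b n) ^ 2 + 14 * (b n) ^ 3
        + 3 * (a n) ^ 2 * c n + 12 * a n * b n * c n) (n : ℕ) :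
    b n = ((5 / 3 : ℝ) ^ n - 1) / 2 * a n ∧ c n = 3 * (((5 / 3 : ℝ) ^ n - 1) / 2) ^ 2 * a n := by
  induction n with
  | zero => simp [hb0, hc0]
  | succ n ih =>
    obtain ⟨hbn, hcn⟩ := ih
    constructor
    · rw [hb n, ha n, hbn, hcn]; ring
    · rw [hc n, ha n, hbn, hcn]; ring

theorem apollonian_a_recursion_general
    (a b c : ℕ → ℝ)
    (hb0 : b 0 = 0) (hc0 : c 0 = 0)
    (ha : ∀ n, a (n + 1) = 3 * (a n) ^ 3 + 6 * (a n) ^ 2 * b n)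
    (hb : ∀ n, b (n + 1) = (a n) ^ 3 + 7 * (a n) ^ 2 * b n + 7 * a n * (b n) ^ 2 + (a n) ^ 2 * c n)
    (hc : ∀ n, c (n + 1) = (a n) ^ 3 + 12 * (a n) ^ 2 * b n + 36 * a n * (b n) ^ 2 + 14 * (b n) ^ 3
        + 3 * (a n) ^ 2 * c n + 12 * a n * b n * c n) :
    ∀ n : ℕ, a (n + 1) = ((5 : ℝ) ^ n / (3 : ℝ) ^ ((n : ℝ) - 1)) * (a n) ^ 3 := by
  intro n
  rw [ha n, (apollonian_b_c_eq_of_recursion hb0 hc0 ha hb hc n).1,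
    ← three_mul_five_div_three_pow]
  ring

theorem apollonian_a_recursion
    (a b c : ℕ → ℝ)
    (ha0 : a 0 = 1) (hb0 : b 0 = 0) (hc0 : c 0 = 0)
    (ha : ∀ n, a (n + 1) = 3 * (a n) ^ 3 + 6 * (a n) ^ 2 * b n)
    (hb : ∀ n, b (n + 1) = (a n) ^ 3 + 7 * (a n) ^ 2 * b n + 7 * a n * (b n) ^ 2 + (a n) ^ 2 * c n)
    (hc : ∀ n, c (n + 1) = (a n) ^ 3 + 12 * (a n) ^ 2 * b n + 36 * a n * (b n) ^ 2 + 14 * (b n) ^ 3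
        + 3 * (a n) ^ 2 * c n + 12 * a n * b n * c n) :
    ∀ n : ℕ, a (n + 1) = ((5 : ℝ) ^ n / (3 : ℝ) ^ ((n : ℝ) - 1)) * (a n) ^ 3 :=
  apollonian_a_recursion_general a b c hb0 hc0 ha hb hc
end

section
/- Let a, b, c : ℕ → ℝ be the sequences with a₀ = 1, b₀ = 0, c₀ = 0 and a_{n+1} = 3a_n³ + 6a_n²b_n, b_{n+1} = a_n³ + 7a_n²b_n + 7a_n b_n² + a_n²c_n, c_{n+1} = a_n³ + 12a_n²b_n + 36a_n b_n² + 14b_n³ + 3a_n²c_n + 12a_n b_n c_n, and define w_n = a_{n+1} / a_n³. Then w₀ = 3, w_{n+1} = (5/3) · w_n for all n ≥ 0, and hence w_n = 3 · (5/3)^n for all n ≥ 0. -/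
/-!
The recurrences preserve the relation `a c = 3 b²`; using it to eliminate `c`, one step reads
`a' = 3a²(a + 2b)` and `a b' = a²(a + 2b)(a + 5b)`. Hence the ratio `r = b / a` evolves on its own,
`r' = (1 + 5r) / 3`, and `w = a' / a³ = 3 + 6r` gets multiplied by `5/3` at every step.
-/

section ApollonianRecurrence

variable {a b c : ℕ → ℝ}

theorem mul_eq_three_mul_sq_of_recurrence (h0 : a 0 * c 0 = 3 * b 0 ^ 2)
    (ha : ∀ n, a (n + 1) = 3 * (a n) ^ 3 + 6 * (a n) ^ 2 * b n)
    (hb : ∀ n, b (n + 1) = (a n) ^ 3 + 7 * (a n) ^ 2 * b n + 7 * a n * (b n) ^ 2 + (a n) ^ 2 * c n)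
    (hc : ∀ n, c (n + 1) = (a n) ^ 3 + 12 * (a n) ^ 2 * b n + 36 * a n * (b n) ^ 2 + 14 * (b n) ^ 3
        + 3 * (a n) ^ 2 * c n + 12 * a n * b n * c n) (n : ℕ) :
    a n * c n = 3 * b n ^ 2 := by
  induction n with
  | zero => exact h0
  | succ k ih =>
    rw [ha, hb, hc]
    linear_combination (3 * a k ^ 4 + 12 * a k ^ 3 * b k - 3 * a k ^ 3 * c k
      + 21 * a k ^ 2 * b k ^ 2) * ih

theorem three_mul_mul_succ_eq_of_recurrence {n : ℕ} (hinv : a n * c n = 3 * b n ^ 2)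
    (ha : a (n + 1) = 3 * (a n) ^ 3 + 6 * (a n) ^ 2 * b n)
    (hb : b (n + 1) = (a n) ^ 3 + 7 * (a n) ^ 2 * b n + 7 * a n * (b n) ^ 2 + (a n) ^ 2 * c n) :
    3 * a n * b (n + 1) = a (n + 1) * (a n + 5 * b n) := by
  rw [ha, hb]
  linear_combination 3 * a n ^ 2 * hinv

theorem pos_and_nonneg_of_recurrence (ha0 : 0 < a 0) (hb0 : 0 ≤ b 0)
    (ha : ∀ n, a (n + 1) = 3 * (a n) ^ 3 + 6 * (a n) ^ 2 * b n)
    (hab : ∀ n, 3 * a n * b (n + 1) = a (n + 1) * (a n + 5 * b n)) (n : ℕ) :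
    0 < a n ∧ 0 ≤ b n := by
  induction n with
  | zero => exact ⟨ha0, hb0⟩
  | succ k ih =>
    obtain ⟨hak, hbk⟩ := ih
    have ha_succ : 0 < a (k + 1) := by rw [ha]; positivity
    refine ⟨ha_succ, nonneg_of_mul_nonneg_right ?_ (by positivity : 0 < 3 * a k)⟩
    rw [hab]
    positivity

theorem div_succ_eq_of_three_mul_mul_succ_eq {n : ℕ} (hn : a n ≠ 0) (hn' : a (n + 1) ≠ 0)
    (hab : 3 * a n * b (n + 1) = a (n + 1) * (a n + 5 * b n)) :
    b (n + 1) / a (n + 1) = (1 + 5 * (b n / a n)) / 3 := by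
  field_simp
  linear_combination hab

end ApollonianRecurrence

theorem apollonian_w_sequence
    (a b c : ℕ → ℝ)
    (ha0 : a 0 = 1) (hb0 : b 0 = 0) (hc0 : c 0 = 0)
    (ha : ∀ n, a (n + 1) = 3 * (a n) ^ 3 + 6 * (a n) ^ 2 * b n)
    (hb : ∀ n, b (n + 1) = (a n) ^ 3 + 7 * (a n) ^ 2 * b n + 7 * a n * (b n) ^ 2 + (a n) ^ 2 * c n)
    (hc : ∀ n, c (n + 1) = (a n) ^ 3 + 12 * (a n) ^ 2 * b n + 36 * a n * (b n) ^ 2 + 14 * (b n) ^ 3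
        + 3 * (a n) ^ 2 * c n + 12 * a n * b n * c n)
    (w : ℕ → ℝ)
    (hw : ∀ n, w n = a (n + 1) / (a n) ^ 3) :
    w 0 = 3 ∧ (∀ n : ℕ, w (n + 1) = (5 / 3) * w n) ∧ (∀ n : ℕ, w n = 3 * (5 / 3 : ℝ) ^ n) := by
  have hinv := mul_eq_three_mul_sq_of_recurrence (by simp [ha0, hb0, hc0]) ha hb hc
  have hab n := three_mul_mul_succ_eq_of_recurrence (hinv n) (ha n) (hb n)
  have hpos n := (pos_and_nonneg_of_recurrence (by simp [ha0]) hb0.ge ha hab n).1.ne'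
  have hw_ratio n : w n = 3 + 6 * (b n / a n) := by
    rw [hw, ha]
    field_simp [hpos n]
  have hw0 : w 0 = 3 := by simp [hw_ratio, hb0]
  have hw_succ n : w (n + 1) = 5 / 3 * w n := by
    rw [hw_ratio, hw_ratio, div_succ_eq_of_three_mul_mul_succ_eq (hpos n) (hpos (n + 1)) (hab n)]
    ring
  refine ⟨hw0, hw_succ, fun n => ?_⟩
  induction n with
  | zero => simpa using hw0
  | succ k ih => rw [hw_succ, ih]; ring
end

section
/- Let a, b, c : ℕ → ℝ be the sequences with a₀ = 1, b₀ = 0, c₀ = 0 and a_{n+1} = 3a_n³ + 6a_n²b_n, b_{n+1} = a_n³ + 7a_n²b_n + 7a_n b_n² + a_n²c_n, c_{n+1} = a_n³ + 12a_n²b_n + 36a_n b_n² + 14b_n³ + 3a_n²c_n + 12a_n b_n c_n. Then for every n ≥ 0, b_{n+1} = a_n³ + 7·a_n²·b_n + 10·a_n·b_n². -/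
/-!
Under the recursion, `a c - 3 b²` is multiplied by the polynomial
`3a⁴ + 12a³b + 21a²b² - 3a³c`, so it vanishes for all `n` because it vanishes at `n = 0`.
Given `a c = 3 b²`, the term `a² c` in the recursion for `b` equals `3 a b²`.
-/

section

variable {R : Type*} [CommRing R]

theorem apollonian_invariant_step {x y z : R} (h : x * z = 3 * y ^ 2) :
    (3 * x ^ 3 + 6 * x ^ 2 * y) * (x ^ 3 + 12 * x ^ 2 * y + 36 * x * y ^ 2 + 14 * y ^ 3
        + 3 * x ^ 2 * z + 12 * x * y * z)
      = 3 * (x ^ 3 + 7 * x ^ 2 * y + 7 * x * y ^ 2 + x ^ 2 * z) ^ 2 := by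
  linear_combination (3 * x ^ 4 + 12 * x ^ 3 * y + 21 * x ^ 2 * y ^ 2 - 3 * x ^ 3 * z) * h

theorem apollonian_b_step_eq_of_invariant {x y z : R} (h : x * z = 3 * y ^ 2) :
    x ^ 3 + 7 * x ^ 2 * y + 7 * x * y ^ 2 + x ^ 2 * z
      = x ^ 3 + 7 * x ^ 2 * y + 10 * x * y ^ 2 := by
  linear_combination x * h

end

theorem apollonian_b_simplified_recursion_general
    (a b c : ℕ → ℝ)
    (hb0 : b 0 = 0) (hc0 : c 0 = 0)
    (ha : ∀ n, a (n + 1) = 3 * (a n) ^ 3 + 6 * (a n) ^ 2 * b n)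
    (hb : ∀ n, b (n + 1) = (a n) ^ 3 + 7 * (a n) ^ 2 * b n + 7 * a n * (b n) ^ 2 + (a n) ^ 2 * c n)
    (hc : ∀ n, c (n + 1) = (a n) ^ 3 + 12 * (a n) ^ 2 * b n + 36 * a n * (b n) ^ 2 + 14 * (b n) ^ 3
        + 3 * (a n) ^ 2 * c n + 12 * a n * b n * c n) :
    ∀ n : ℕ, b (n + 1) = (a n) ^ 3 + 7 * (a n) ^ 2 * b n + 10 * a n * (b n) ^ 2 := by
  have invariant : ∀ n, a n * c n = 3 * b n ^ 2 := by
    intro n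
    induction n with
    | zero => simp [hb0, hc0]
    | succ k ih =>
      rw [ha k, hb k, hc k]
      exact apollonian_invariant_step ih
  intro n
  rw [hb n]
  exact apollonian_b_step_eq_of_invariant (invariant n)

theorem apollonian_b_simplified_recursion
    (a b c : ℕ → ℝ)
    (ha0 : a 0 = 1) (hb0 : b 0 = 0) (hc0 : c 0 = 0)
    (ha : ∀ n, a (n + 1) = 3 * (a n) ^ 3 + 6 * (a n) ^ 2 * b n)
    (hb : ∀ n, b (n + 1) = (a n) ^ 3 + 7 * (a n) ^ 2 * b n + 7 * a n * (b n) ^ 2 + (a n) ^ 2 * c n)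
    (hc : ∀ n, c (n + 1) = (a n) ^ 3 + 12 * (a n) ^ 2 * b n + 36 * a n * (b n) ^ 2 + 14 * (b n) ^ 3
        + 3 * (a n) ^ 2 * c n + 12 * a n * b n * c n) :
    ∀ n : ℕ, b (n + 1) = (a n) ^ 3 + 7 * (a n) ^ 2 * b n + 10 * a n * (b n) ^ 2 :=
  apollonian_b_simplified_recursion_general a b c hb0 hc0 ha hb hc
end

section
/- Define s : ℕ → ℝ for n ≥ 1 by s_n = (1/4) · 3^{(3/4)(−1 + 3^{n−1} − 2(n−1))} · 5^{(1/4)(−3 + 3^n − 2(n−1))} · (3^n + 5^n)², and let V_n = (3^n + 5)/2. Then the sequence z_n = (ln s_n)/V_n converges, and its limit as n → ∞ equals (ln 15)/2. -/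
/-! The closed form gives `log s_n = (log 15 / 4) 3^n + O(n)`, while `V_n = 3^n / 2 + O(1)`;
dividing both by `3^n` the ratio tends to `(log 15 / 4) / (1 / 2)`. -/

open Filter Topology Asymptotics Real

theorem tendsto_div_of_isLittleO_sub_mul {α 𝕜 : Type*} [NormedField 𝕜] {l : Filter α}
    {f g w : α → 𝕜} {a b : 𝕜} (hb : b ≠ 0) (hf : (fun x => f x - a * w x) =o[l] w)
    (hg : (fun x => g x - b * w x) =o[l] w) (hw : ∀ᶠ x in l, w x ≠ 0) :
    Tendsto (fun x => f x / g x) l (𝓝 (a / b)) := by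
  have ratio : ∀ {h : α → 𝕜} {c : 𝕜}, (fun x => h x - c * w x) =o[l] w →
      Tendsto (fun x => h x / w x) l (𝓝 c) := fun {h c} hh => by
    have := hh.tendsto_div_nhds_zero.add_const c
    rw [zero_add] at this
    refine this.congr' (hw.mono fun x hx => ?_)
    field_simp
    ring
  refine ((ratio hf).div (ratio hg) hb).congr' (hw.mono fun x hx => ?_)
  exact div_div_div_cancel_right₀ hx _ _

theorem isLittleO_const_const_pow_of_one_lt {E : Type*} [NormedAddCommGroup E] (c : E) {r : ℝ}
    (hr : 1 < r) : (fun _ : ℕ => c) =o[atTop] fun n => r ^ n :=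
  isLittleO_const_left.2 <| .inr <| (tendsto_pow_atTop_atTop_of_one_lt hr).congr fun n => by
    simp [abs_of_pos (zero_lt_one.trans hr)]

theorem isBigO_log_pow_add_pow {a b : ℝ} (ha : 0 ≤ a) (hab : a ≤ b) (hb : 1 ≤ b) :
    (fun n : ℕ => log (a ^ n + b ^ n)) =O[atTop] fun n => (n : ℝ) := by
  refine .of_bound (log 2 + log b) ((eventually_ge_atTop 1).mono fun n hn => ?_)
  have hbn : 1 ≤ b ^ n := one_le_pow₀ hb
  have hsum : a ^ n + b ^ n ≤ 2 * b ^ n := by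
    linarith [pow_le_pow_left₀ ha hab n]
  have hn' : (1 : ℝ) ≤ n := by exact_mod_cast hn
  have hlog_nonneg : 0 ≤ log (a ^ n + b ^ n) := log_nonneg (by linarith [pow_nonneg ha n])
  rw [norm_of_nonneg hlog_nonneg, norm_of_nonneg (by positivity)]
  calc log (a ^ n + b ^ n) ≤ log (2 * b ^ n) := log_le_log (by positivity) hsum
    _ = log 2 + n * log b := by rw [log_mul two_ne_zero (by positivity), log_pow]
    _ ≤ (log 2 + log b) * n := by nlinarith [log_nonneg hb, log_nonneg one_le_two]

/-- The closed form of `s_n`, meaningful only for `1 ≤ n` (`n - 1` truncates in `ℕ`). -/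
noncomputable def apollonianTreeCount (n : ℕ) : ℝ :=
  (1 / 4) * (3 : ℝ) ^ ((3 / 4 : ℝ) * (-1 + (3 : ℝ) ^ (n - 1) - 2 * ((n : ℝ) - 1)))
    * (5 : ℝ) ^ ((1 / 4 : ℝ) * (-3 + (3 : ℝ) ^ n - 2 * ((n : ℝ) - 1)))
    * ((3 : ℝ) ^ n + (5 : ℝ) ^ n) ^ 2

theorem log_apollonianTreeCount {n : ℕ} (hn : 1 ≤ n) :
    log (apollonianTreeCount n) = log 15 / 4 * 3 ^ n + (log (1 / 4) + (3 * log 3 - log 5) / 4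
      - (3 * log 3 + log 5) / 2 * n + 2 * log (3 ^ n + 5 ^ n)) := by
  obtain ⟨m, rfl⟩ := Nat.exists_eq_add_of_le' hn
  rw [apollonianTreeCount, log_mul (by positivity) (by positivity),
    log_mul (by positivity) (by positivity), log_mul (by positivity) (by positivity),
    log_rpow (by norm_num), log_rpow (by norm_num), log_pow,
    show (15 : ℝ) = 3 * 5 by norm_num, log_mul (by norm_num) (by norm_num), Nat.add_sub_cancel]
  push_cast
  ring

theorem isLittleO_log_apollonianTreeCount_sub :
    (fun n => log (apollonianTreeCount n) - log 15 / 4 * 3 ^ n) =o[atTop]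
      fun n => (3 : ℝ) ^ n := by
  have h3 : (1 : ℝ) < 3 := by norm_num
  have hconst := isLittleO_const_const_pow_of_one_lt (log (1 / 4) + (3 * log 3 - log 5) / 4) h3
  have hlin := isLittleO_coe_const_pow_of_one_lt (R := ℝ) h3
  have hlog := (isBigO_log_pow_add_pow (a := 3) (b := 5) (by norm_num) (by norm_num)
    (by norm_num)).trans_isLittleO hlin
  refine ((hconst.sub (hlin.const_mul_left ((3 * log 3 + log 5) / 2))).add
    (hlog.const_mul_left 2)).congr' ?_ EventuallyEq.rfl
  filter_upwards [eventually_ge_atTop 1] with n hn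
  rw [log_apollonianTreeCount hn]
  ring

theorem apollonian_entropy_limit
    (s : ℕ → ℝ)
    (hs : ∀ n : ℕ, 1 ≤ n →
      s n = (1 / 4) * (3 : ℝ) ^ ((3 / 4 : ℝ) * (-1 + (3 : ℝ) ^ (n - 1) - 2 * ((n : ℝ) - 1)))
          * (5 : ℝ) ^ ((1 / 4 : ℝ) * (-3 + (3 : ℝ) ^ n - 2 * ((n : ℝ) - 1)))
          * ((3 : ℝ) ^ n + (5 : ℝ) ^ n) ^ 2)
    (V : ℕ → ℝ)
    (hV : ∀ n : ℕ, V n = ((3 : ℝ) ^ n + 5) / 2) :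
    Tendsto (fun n : ℕ => Real.log (s n) / V n) atTop (nhds (Real.log 15 / 2)) := by
  have hlog : (fun n => log (s n) - log 15 / 4 * 3 ^ n) =o[atTop] fun n => (3 : ℝ) ^ n :=
    isLittleO_log_apollonianTreeCount_sub.congr' ((eventually_ge_atTop 1).mono fun n hn => by
      simp only [hs n hn, apollonianTreeCount]) EventuallyEq.rfl
  have hvert : (fun n => V n - 1 / 2 * 3 ^ n) =o[atTop] fun n => (3 : ℝ) ^ n :=
    (isLittleO_const_const_pow_of_one_lt (5 / 2 : ℝ) (by norm_num)).congr_left fun n => by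
      rw [hV]; ring
  convert tendsto_div_of_isLittleO_sub_mul (by norm_num) hlog hvert
    (.of_forall fun n => by positivity) using 2
  ring
end

section
/- Let a, b, c : ℕ → ℝ be the sequences with a₀ = 1, b₀ = 0, c₀ = 0 and a_{n+1} = 3a_n³ + 6a_n²b_n, b_{n+1} = a_n³ + 7a_n²b_n + 7a_n b_n² + a_n²c_n, c_{n+1} = a_n³ + 12a_n²b_n + 36a_n b_n² + 14b_n³ + 3a_n²c_n + 12a_n b_n c_n. Then for every n ≥ 0, a_{n+2} / a_{n+1}³ = (5/3) · (a_{n+1} / a_n³). -/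
/-!
Along the recursion the relation `a c = 3 b²` is preserved, and it holds initially. Under it the
`b`-update factors as `a (a + 2b) (a + 5b)`, and then `3 aₙ³ aₙ₊₂ = 5 aₙ₊₁⁴` is a polynomial
identity in `aₙ, bₙ`. Division by zero needs no separate treatment: `aₙ = 0` forces `aₙ₊₁ = 0`,
and both sides of the claim are then `0` by Lean's convention `x / 0 = 0`.
-/

section ApollonianStep

variable {R : Type*} [CommRing R] {a b c : R}

theorem apollonian_step_mul_eq_three_mul_sq (h : a * c = 3 * b ^ 2) :
    (3 * a ^ 3 + 6 * a ^ 2 * b) *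
        (a ^ 3 + 12 * a ^ 2 * b + 36 * a * b ^ 2 + 14 * b ^ 3 + 3 * a ^ 2 * c + 12 * a * b * c) =
      3 * (a ^ 3 + 7 * a ^ 2 * b + 7 * a * b ^ 2 + a ^ 2 * c) ^ 2 := by
  linear_combination (3 * a ^ 4 + 12 * a ^ 3 * b + 21 * a ^ 2 * b ^ 2 - 3 * a ^ 3 * c) * h

theorem apollonian_step_b_eq_mul (h : a * c = 3 * b ^ 2) :
    a ^ 3 + 7 * a ^ 2 * b + 7 * a * b ^ 2 + a ^ 2 * c = a * (a + 2 * b) * (a + 5 * b) := by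
  linear_combination a * h

theorem apollonian_two_step (h : a * c = 3 * b ^ 2) :
    3 * a ^ 3 * (3 * (3 * a ^ 3 + 6 * a ^ 2 * b) ^ 3 +
        6 * (3 * a ^ 3 + 6 * a ^ 2 * b) ^ 2 * (a ^ 3 + 7 * a ^ 2 * b + 7 * a * b ^ 2 + a ^ 2 * c)) =
      5 * (3 * a ^ 3 + 6 * a ^ 2 * b) ^ 4 := by
  rw [apollonian_step_b_eq_mul h]
  ring

end ApollonianStep

theorem div_pow_three_eq_of_mul_eq {K : Type*} [Field K] [CharZero K] {x y z : K}
    (hxy : x = 0 → y = 0) (h : 3 * x ^ 3 * z = 5 * y ^ 4) :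
    z / y ^ 3 = 5 / 3 * (y / x ^ 3) := by
  rcases eq_or_ne x 0 with rfl | hx
  · simp [hxy rfl]
  rcases eq_or_ne y 0 with rfl | hy
  · simp
  field_simp
  linear_combination h

theorem apollonian_w_recursion_general
    (a b c : ℕ → ℝ)
    (hb0 : b 0 = 0) (hc0 : c 0 = 0)
    (ha : ∀ n, a (n + 1) = 3 * (a n) ^ 3 + 6 * (a n) ^ 2 * b n)
    (hb : ∀ n, b (n + 1) = (a n) ^ 3 + 7 * (a n) ^ 2 * b n + 7 * a n * (b n) ^ 2 + (a n) ^ 2 * c n)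
    (hc : ∀ n, c (n + 1) = (a n) ^ 3 + 12 * (a n) ^ 2 * b n + 36 * a n * (b n) ^ 2 + 14 * (b n) ^ 3
        + 3 * (a n) ^ 2 * c n + 12 * a n * b n * c n) :
    ∀ n : ℕ, a (n + 2) / (a (n + 1)) ^ 3 = (5 / 3) * (a (n + 1) / (a n) ^ 3) := by
  have invariant : ∀ n, a n * c n = 3 * b n ^ 2 := by
    intro n
    induction n with
    | zero => simp [hb0, hc0]
    | succ n ih =>
      rw [ha, hb, hc]
      exact apollonian_step_mul_eq_three_mul_sq ih
  intro n
  refine div_pow_three_eq_of_mul_eq (fun h0 => by simp [ha n, h0]) ?_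
  rw [ha (n + 1), hb n, ha n]
  exact apollonian_two_step (invariant n)

theorem apollonian_w_recursion
    (a b c : ℕ → ℝ)
    (ha0 : a 0 = 1) (hb0 : b 0 = 0) (hc0 : c 0 = 0)
    (ha : ∀ n, a (n + 1) = 3 * (a n) ^ 3 + 6 * (a n) ^ 2 * b n)
    (hb : ∀ n, b (n + 1) = (a n) ^ 3 + 7 * (a n) ^ 2 * b n + 7 * a n * (b n) ^ 2 + (a n) ^ 2 * c n)
    (hc : ∀ n, c (n + 1) = (a n) ^ 3 + 12 * (a n) ^ 2 * b n + 36 * a n * (b n) ^ 2 + 14 * (b n) ^ 3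
        + 3 * (a n) ^ 2 * c n + 12 * a n * b n * c n) :
    ∀ n : ℕ, a (n + 2) / (a (n + 1)) ^ 3 = (5 / 3) * (a (n + 1) / (a n) ^ 3) :=
  apollonian_w_recursion_general a b c hb0 hc0 ha hb hc
end
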